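/- arXiv:1006.1300 — 5 statements merged into one kernel-verified Lean document; each statement's English description precedes it below -/
import Mathlib

section
/- Suppose Γ is a k-uniform hypergraph and A_1,...,A_k are vertex subsets each of cardinality n with d = d(A_1,...,A_k). If 0 < α, β < 1/4 are such that d ≥ 2β and (A_1,...,A_k) is not (α,β)-superregular, then there are subsets B_i ⊆ A_i for i ∈ [k] with |B_1| = ⋯ = |B_k| ≥ α n and d(B_1,...,B_k) ≥ (1 + α^k/2)·d. -/
open Finset

noncomputable def hypEdgeCount {V : Type*} [Fintype V] [DecidableEq V] {k : ℕ}
    (Γ : Finset (Fin k → V)) (A : Fin k → Finset V) : ℕ :=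
  (Γ.filter fun x => ∀ i, x i ∈ A i).card

noncomputable def hypDensity {V : Type*} [Fintype V] [DecidableEq V] {k : ℕ}
    (Γ : Finset (Fin k → V)) (A : Fin k → Finset V) : ℝ :=
  (hypEdgeCount Γ A : ℝ) / ∏ i, ((A i).card : ℝ)

/-- `(A 0, …, A (k-1))` is `(α, β)`-superregular in `Γ` if every tuple of subsets
`U i ⊆ A i` with `|U i| ≥ α |A i|` satisfies `d(U) ≥ β`. -/
def Superregular {V : Type*} [Fintype V] [DecidableEq V] {k : ℕ}
    (Γ : Finset (Fin k → V)) (A : Fin k → Finset V) (α β : ℝ) : Prop :=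
  ∀ U : Fin k → Finset V, (∀ i, U i ⊆ A i) → (∀ i, α * (A i).card ≤ ((U i).card : ℝ)) →
    β ≤ hypDensity Γ U

/-!
Let `U ⊆ A` be a sparse box: `d(U) < β`, all sides at least `αn`. Removing from a side the vertex
of largest (resp. smallest) degree does not raise (resp. lower) the density, so any box can be
shrunk to prescribed positive side lengths keeping its density below (resp. above) the original.
Shrink `U` to sides `m = ⌈αn⌉ ≤ n/2`. Splitting every `A i` into `U i` and `A i \ U i` cuts `A`
into `2^k` boxes with all sides at least `m`. The box `U` has at least an `α^k` fraction of the
volume of `A` but at most `β m^k ≤ d m^k / 2` edges, so the other `2^k - 1` boxes together, hence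
one of them, have density at least `(1 + α^k/2) d`; shrink that one to sides `m`.
-/

open Function

section Averaging

variable {ι R : Type*} [DecidableEq ι] [Field R] [LinearOrder R] [IsStrictOrderedRing R]
  {s : Finset ι} (w : ι → R)

theorem Finset.exists_mem_sum_erase_div_card_le (hs : 1 < #s) :
    ∃ v ∈ s, (∑ x ∈ s.erase v, w x) / #(s.erase v) ≤ (∑ x ∈ s, w x) / #s := by
  obtain ⟨v, hv, hmax⟩ := s.exists_max_image w (card_pos.1 (by omega))
  refine ⟨v, hv, ?_⟩
  have hle := sum_le_card_nsmul (s.erase v) w (w v) fun x hx => hmax x (mem_of_mem_erase hx)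
  have hcard : (#s : R) = #(s.erase v) + 1 := by
    rw [card_erase_of_mem hv, Nat.cast_sub (by omega)]; ring
  have hpos : (0 : R) < #(s.erase v) := by rw [card_erase_of_mem hv]; exact_mod_cast (by omega)
  rw [← add_sum_erase s w hv, hcard, div_le_div_iff₀ hpos (by positivity)]
  rw [nsmul_eq_mul] at hle
  nlinarith

theorem Finset.exists_mem_sum_div_card_le_sum_erase_div (hs : 1 < #s) :
    ∃ v ∈ s, (∑ x ∈ s, w x) / #s ≤ (∑ x ∈ s.erase v, w x) / #(s.erase v) := by
  obtain ⟨v, hv, hmin⟩ := s.exists_min_image w (card_pos.1 (by omega))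
  refine ⟨v, hv, ?_⟩
  have hle := card_nsmul_le_sum (s.erase v) w (w v) fun x hx => hmin x (mem_of_mem_erase hx)
  have hcard : (#s : R) = #(s.erase v) + 1 := by
    rw [card_erase_of_mem hv, Nat.cast_sub (by omega)]; ring
  have hpos : (0 : R) < #(s.erase v) := by rw [card_erase_of_mem hv]; exact_mod_cast (by omega)
  rw [← add_sum_erase s w hv, hcard, div_le_div_iff₀ (by positivity) hpos]
  rw [nsmul_eq_mul] at hle
  nlinarith

end Averaging

theorem exists_forall_subset_card_eq_le_of_erase {ι V α : Type*} [Fintype ι] [DecidableEq ι]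
    [DecidableEq V] [Preorder α] (f : (ι → Finset V) → α)
    (hf : ∀ A i, 1 < #(A i) → ∃ v ∈ A i, f (update A i ((A i).erase v)) ≤ f A)
    (A : ι → Finset V) (t : ι → ℕ) (ht : ∀ i, 0 < t i) (htA : ∀ i, t i ≤ #(A i)) :
    ∃ B : ι → Finset V, (∀ i, B i ⊆ A i) ∧ (∀ i, #(B i) = t i) ∧ f B ≤ f A := by
  induction hN : ∑ i, #(A i) using Nat.strong_induction_on generalizing A with
  | _ N ih =>
  by_cases hAt : ∀ i, #(A i) = t i
  · exact ⟨A, fun _ => subset_rfl, hAt, le_rfl⟩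
  obtain ⟨i, hi⟩ := not_forall.1 hAt
  obtain ⟨v, hv, hfv⟩ := hf A i (by have := htA i; have := ht i; omega)
  set A' := update A i ((A i).erase v)
  have hA'A : ∀ j, A' j ⊆ A j := by
    intro j
    rcases eq_or_ne j i with rfl | hj
    · simpa [A'] using erase_subset v (A j)
    · simp [A', hj]
  have hA't : ∀ j, t j ≤ #(A' j) := by
    intro j
    rcases eq_or_ne j i with rfl | hj
    · have := htA j; simp [A', card_erase_of_mem hv]; omega
    · simpa [A', hj] using htA j
  have hsum : ∑ j, #(A' j) < N := hN ▸ sum_lt_sum (fun j _ => card_le_card (hA'A j))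
    ⟨i, mem_univ i, card_lt_card (by simpa [A'] using erase_ssubset hv)⟩
  obtain ⟨B, hBA', hBt, hB⟩ := ih _ hsum A' hA't rfl
  exact ⟨B, fun j => (hBA' j).trans (hA'A j), hBt, hB.trans hfv⟩

def boxPiece {ι V : Type*} [DecidableEq ι] [DecidableEq V] (A U : ι → Finset V) (S : Finset ι) :
    ι → Finset V :=
  fun i => if i ∈ S then A i \ U i else U i

section Hypergraph

variable {V : Type*} [Fintype V] [DecidableEq V] {k : ℕ} (Γ : Finset (Fin k → V))

theorem hypDensity_nonneg (A : Fin k → Finset V) : 0 ≤ hypDensity Γ A := by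
  unfold hypDensity; positivity

theorem hypEdgeCount_eq_hypDensity_mul_prod (A : Fin k → Finset V) :
    (hypEdgeCount Γ A : ℝ) = hypDensity Γ A * ∏ i, (#(A i) : ℝ) := by
  rcases eq_or_ne (∏ i, (#(A i) : ℝ)) 0 with h | h
  · obtain ⟨i, -, hi⟩ := prod_eq_zero_iff.1 h
    have hAi : A i = ∅ := card_eq_zero.1 (by exact_mod_cast hi)
    have : hypEdgeCount Γ A = 0 :=
      card_eq_zero.2 (filter_eq_empty_iff.2 fun x _ hx => by simpa [hAi] using hx i)
    simp [this, h]
  · rw [hypDensity, div_mul_cancel₀ _ h]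

theorem hypEdgeCount_univ (A : Fin k → Finset V) :
    hypEdgeCount univ A = ∏ i, #(A i) := by
  rw [hypEdgeCount, ← Fintype.card_piFinset]
  congr 1
  ext x
  simp [Fintype.mem_piFinset]

theorem hypEdgeCount_eq_sum_boxPiece {A U : Fin k → Finset V} (hUA : ∀ i, U i ⊆ A i) :
    hypEdgeCount Γ A = ∑ S : Finset (Fin k), hypEdgeCount Γ (boxPiece A U S) := by
  unfold hypEdgeCount
  rw [card_eq_sum_card_fiberwise (f := fun x => univ.filter fun i => x i ∉ U i) (t := univ)
    fun _ _ => mem_coe.2 (mem_univ _)]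
  refine sum_congr rfl fun S _ => congrArg card ?_
  rw [filter_filter]
  refine filter_congr fun x _ => ?_
  simp only [boxPiece, Finset.ext_iff, mem_filter, mem_univ, true_and, ← forall_and]
  refine forall_congr' fun i => ?_
  split_ifs with hi <;> simp only [hi, mem_sdiff, iff_true, iff_false, not_not]
  exact ⟨And.right, fun h => ⟨hUA i h, h⟩⟩

theorem hypEdgeCount_eq_add_sum_boxPiece {A U : Fin k → Finset V} (hUA : ∀ i, U i ⊆ A i) :
    hypEdgeCount Γ A =
      hypEdgeCount Γ U + ∑ S ∈ univ.erase ∅, hypEdgeCount Γ (boxPiece A U S) := by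
  rw [hypEdgeCount_eq_sum_boxPiece Γ hUA, ← add_sum_erase _ _ (mem_univ ∅)]
  congr 2

theorem hypEdgeCount_update_eq_sum (A : Fin k → Finset V) (i : Fin k) (S : Finset V) :
    hypEdgeCount Γ (update A i S) = ∑ v ∈ S, hypEdgeCount Γ (update A i {v}) := by
  unfold hypEdgeCount
  rw [card_eq_sum_card_fiberwise (f := fun x => x i)
    fun x hx => by simpa using (mem_filter.1 hx).2 i]
  refine sum_congr rfl fun v hv => ?_
  rw [filter_filter]
  refine congrArg card (filter_congr fun x _ => ?_)
  rw [forall_update_iff A fun j s => x j ∈ s, forall_update_iff A fun j s => x j ∈ s,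
    mem_singleton]
  constructor
  · rintro ⟨⟨-, h⟩, rfl⟩; exact ⟨rfl, h⟩
  · rintro ⟨rfl, h⟩; exact ⟨⟨hv, h⟩, rfl⟩

theorem hypDensity_update (A : Fin k → Finset V) (i : Fin k) (S : Finset V) :
    hypDensity Γ (update A i S) =
      (∑ v ∈ S, (hypEdgeCount Γ (update A i {v}) : ℝ)) / #S /
        ∏ j ∈ univ.erase i, (#(A j) : ℝ) := by
  rw [hypDensity, hypEdgeCount_update_eq_sum, ← mul_prod_erase _ _ (mem_univ i), div_div]
  push_cast
  congr 2
  · rw [update_self]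
  · exact prod_congr rfl fun j hj => by rw [update_of_ne (ne_of_mem_erase hj)]

theorem exists_hypDensity_update_erase_le (A : Fin k → Finset V) (i : Fin k) (hA : 1 < #(A i)) :
    ∃ v ∈ A i, hypDensity Γ (update A i ((A i).erase v)) ≤ hypDensity Γ A := by
  obtain ⟨v, hv, h⟩ := (A i).exists_mem_sum_erase_div_card_le
    (fun v => (hypEdgeCount Γ (update A i {v}) : ℝ)) hA
  refine ⟨v, hv, ?_⟩
  conv_rhs => rw [← update_eq_self i A, hypDensity_update]
  rw [hypDensity_update]
  gcongr

theorem exists_hypDensity_le_update_erase (A : Fin k → Finset V) (i : Fin k) (hA : 1 < #(A i)) :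
    ∃ v ∈ A i, hypDensity Γ A ≤ hypDensity Γ (update A i ((A i).erase v)) := by
  obtain ⟨v, hv, h⟩ := (A i).exists_mem_sum_div_card_le_sum_erase_div
    (fun v => (hypEdgeCount Γ (update A i {v}) : ℝ)) hA
  refine ⟨v, hv, ?_⟩
  conv_lhs => rw [← update_eq_self i A, hypDensity_update]
  rw [hypDensity_update]
  gcongr

theorem exists_subbox_card_eq_hypDensity_le (A : Fin k → Finset V) (t : Fin k → ℕ)
    (ht : ∀ i, 0 < t i) (htA : ∀ i, t i ≤ #(A i)) :
    ∃ B : Fin k → Finset V, (∀ i, B i ⊆ A i) ∧ (∀ i, #(B i) = t i) ∧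
      hypDensity Γ B ≤ hypDensity Γ A :=
  exists_forall_subset_card_eq_le_of_erase (hypDensity Γ) (exists_hypDensity_update_erase_le Γ)
    A t ht htA

theorem exists_subbox_card_eq_hypDensity_ge (A : Fin k → Finset V) (t : Fin k → ℕ)
    (ht : ∀ i, 0 < t i) (htA : ∀ i, t i ≤ #(A i)) :
    ∃ B : Fin k → Finset V, (∀ i, B i ⊆ A i) ∧ (∀ i, #(B i) = t i) ∧
      hypDensity Γ A ≤ hypDensity Γ B :=
  exists_forall_subset_card_eq_le_of_erase (fun B => OrderDual.toDual (hypDensity Γ B))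
    (fun B i hB => (exists_hypDensity_le_update_erase Γ B i hB).imp
      fun _ => And.imp_right OrderDual.toDual_le_toDual.2) A t ht htA |>.imp
    fun _ => And.imp_right <| And.imp_right OrderDual.toDual_le_toDual.1

theorem exists_subbox_card_eq_hypDensity_increment {A U : Fin k → Finset V} {n m : ℕ} {β c : ℝ}
    (hA : ∀ i, #(A i) = n) (hUA : ∀ i, U i ⊆ A i) (hU : ∀ i, #(U i) = m) (hm : 0 < m)
    (hmn : 2 * m ≤ n) (hc : 0 ≤ c) (hcm : c * n ^ k ≤ m ^ k) (hβA : 2 * β ≤ hypDensity Γ A)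
    (hβU : hypDensity Γ U < β) :
    ∃ B : Fin k → Finset V, (∀ i, B i ⊆ A i) ∧ (∀ i, #(B i) = m) ∧
      (1 + c / 2) * hypDensity Γ A ≤ hypDensity Γ B := by
  have hPA : ∀ S i, boxPiece A U S i ⊆ A i := fun S i => by
    unfold boxPiece; split_ifs
    exacts [sdiff_subset, hUA i]
  have hPm : ∀ S i, m ≤ #(boxPiece A U S i) := fun S i => by
    unfold boxPiece; split_ifs
    · rw [card_sdiff_of_subset (hUA i), hA, hU]; omega
    · rw [hU]
  have hvol : (n : ℝ) ^ k = m ^ k + ∑ S ∈ univ.erase ∅, ∏ i, (#(boxPiece A U S i) : ℝ) := by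
    have := hypEdgeCount_eq_add_sum_boxPiece univ hUA
    simp only [hypEdgeCount_univ, hA, hU, prod_const, card_univ, Fintype.card_fin] at this
    exact_mod_cast this
  have hedges : (hypEdgeCount Γ A : ℝ) =
      hypEdgeCount Γ U + ∑ S ∈ univ.erase ∅, (hypEdgeCount Γ (boxPiece A U S) : ℝ) := by
    exact_mod_cast hypEdgeCount_eq_add_sum_boxPiece Γ hUA
  obtain ⟨S, -, hS⟩ : ∃ S ∈ univ.erase ∅,
      (1 + c / 2) * hypDensity Γ A * ∏ i, (#(boxPiece A U S i) : ℝ) <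
        hypEdgeCount Γ (boxPiece A U S) := by
    refine exists_lt_of_sum_lt ?_
    rw [← mul_sum, ← sub_eq_of_eq_add' hvol, ← sub_eq_of_eq_add' hedges,
      hypEdgeCount_eq_hypDensity_mul_prod, hypEdgeCount_eq_hypDensity_mul_prod]
    simp only [hA, hU, prod_const, card_univ, Fintype.card_fin]
    have hmk : (0 : ℝ) < m ^ k := by positivity
    have hd := hypDensity_nonneg Γ A
    nlinarith [mul_lt_mul_of_pos_right hβU hmk, mul_le_mul_of_nonneg_left hcm hd,
      mul_nonneg (mul_nonneg hc hd) hmk.le]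
  obtain ⟨B, hBP, hBm, hB⟩ :=
    exists_subbox_card_eq_hypDensity_ge Γ (boxPiece A U S) (fun _ => m) (fun _ => hm) (hPm S)
  refine ⟨B, fun i => (hBP i).trans (hPA S i), hBm, le_trans ?_ hB⟩
  rw [hypEdgeCount_eq_hypDensity_mul_prod] at hS
  exact (lt_of_mul_lt_mul_right hS (prod_nonneg fun _ _ => Nat.cast_nonneg _)).le

end Hypergraph

theorem two_mul_ceil_mul_le {α : ℝ} {n : ℕ} (hα : α ≤ 1 / 4) (hn : 2 ≤ n) :
    2 * ⌈α * n⌉₊ ≤ n := by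
  suffices ⌈α * n⌉₊ ≤ n / 2 by omega
  refine Nat.ceil_le.2 ?_
  have hn' : (2 : ℝ) ≤ n := by exact_mod_cast hn
  have hhalf : (n : ℝ) ≤ 2 * (n / 2 : ℕ) + 1 := by
    exact_mod_cast (by omega : n ≤ 2 * (n / 2) + 1)
  nlinarith

theorem stmt_1_general {V : Type*} [Fintype V] [DecidableEq V] {k : ℕ}
    (Γ : Finset (Fin k → V)) (A : Fin k → Finset V) (n : ℕ)
    (hA : ∀ i, (A i).card = n) (α β : ℝ) (hα : 0 < α) (hα' : α < 1/4)
    (hd : 2 * β ≤ hypDensity Γ A)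
    (hnotreg : ¬ Superregular Γ A α β) :
    ∃ B : Fin k → Finset V, (∀ i, B i ⊆ A i) ∧
      (∀ i j, (B i).card = (B j).card) ∧
      (∀ i, α * n ≤ ((B i).card : ℝ)) ∧
      (1 + α ^ k / 2) * hypDensity Γ A ≤ hypDensity Γ B := by
  obtain ⟨U, hUA, hUn, hUβ⟩ : ∃ U : Fin k → Finset V, (∀ i, U i ⊆ A i) ∧
      (∀ i, α * n ≤ (#(U i) : ℝ)) ∧ hypDensity Γ U < β := by
    simpa [Superregular, hA] using hnotreg
  have hn : 2 ≤ n := by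
    by_contra! hn
    have hUeq : U = A := funext fun i => eq_of_subset_of_card_le (hUA i) <| by
      rw [hA]
      obtain rfl | rfl : n = 0 ∨ n = 1 := by omega
      · exact Nat.zero_le _
      · exact (Nat.cast_pos (α := ℝ)).1 (hα.trans_le (by simpa using hUn i))
    subst hUeq
    linarith [hypDensity_nonneg Γ U]
  set m := ⌈α * n⌉₊
  have hm : 0 < m := Nat.ceil_pos.2 (by positivity)
  obtain ⟨U', hU'U, hU'm, hU'β⟩ := exists_subbox_card_eq_hypDensity_le Γ U (fun _ => m)
    (fun _ => hm) fun i => Nat.ceil_le.2 (hUn i)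
  obtain ⟨B, hBA, hBm, hB⟩ := exists_subbox_card_eq_hypDensity_increment Γ hA
    (fun i => (hU'U i).trans (hUA i)) hU'm hm (two_mul_ceil_mul_le hα'.le hn) (c := α ^ k)
    (by positivity) (by rw [← mul_pow]; exact pow_le_pow_left₀ (by positivity) (Nat.le_ceil _) k)
    hd (hU'β.trans_lt hUβ)
  exact ⟨B, hBA, fun i j => by rw [hBm, hBm], fun i => hBm i ▸ Nat.le_ceil _, hB⟩

theorem stmt_1 {V : Type*} [Fintype V] [DecidableEq V] {k : ℕ}
    (Γ : Finset (Fin k → V)) (A : Fin k → Finset V) (n : ℕ)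
    (hA : ∀ i, (A i).card = n) (α β : ℝ) (hα : 0 < α) (hα' : α < 1/4)
    (hβ : 0 < β) (hβ' : β < 1/4) (hd : 2 * β ≤ hypDensity Γ A)
    (hnotreg : ¬ Superregular Γ A α β) :
    ∃ B : Fin k → Finset V, (∀ i, B i ⊆ A i) ∧
      (∀ i j, (B i).card = (B j).card) ∧
      (∀ i, α * n ≤ ((B i).card : ℝ)) ∧
      (1 + α ^ k / 2) * hypDensity Γ A ≤ hypDensity Γ B :=
  stmt_1_general Γ A n hA α β hα hα' hd hnotreg
end

section
/- Let f(x) = x log x for x > 0 and f(0) = 0. Let ε_1,...,ε_s and x_1,...,x_s be nonnegative real numbers with ∑_{i=1}^{s} ε_i = 1, and a = ∑_{i=1}^{s} ε_i x_i. Suppose β < 1 and I ⊆ [s] is such that x_i ≤ β·a for all i ∈ I, and let c = ∑_{i ∈ I} ε_i. Then ∑_{i=1}^{s} ε_i f(x_i) ≥ f(a) + (1 − β + f(β))·c·a. -/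
/-!
Writing `klFun t = t log t + 1 - t` for the Kullback–Leibler integrand, the gap between `f` and its
tangent line at `a > 0` is `f y - f a - (log a + 1)(y - a) = a · klFun (y / a)`. Averaging against
the weights `ε`, the linear term vanishes, so `∑ ε i f (x i) - f a = a ∑ ε i klFun (x i / a)`.
Each term is nonnegative, and `klFun` is decreasing on `[0, 1]`, so every `i ∈ I` (where
`x i / a ≤ β`) contributes at least `ε i · klFun β = ε i (1 - β + f β)`. For `a = 0` the
claim is just Jensen's inequality.
-/

open Finset

/-- The function `f(x) = x log x` (with `f(0) = 0`). -/
noncomputable def entf (x : ℝ) : ℝ := x * Real.log x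

open Real InformationTheory

lemma InformationTheory.antitoneOn_klFun : AntitoneOn klFun (Set.Icc 0 1) := by
  refine antitoneOn_of_deriv_nonpos (convex_Icc 0 1) continuous_klFun.continuousOn ?_ ?_ <;>
    rw [interior_Icc]
  · exact fun x hx => (hasDerivAt_klFun hx.1.ne').differentiableAt.differentiableWithinAt
  · exact fun x hx => deriv_klFun ▸ log_nonpos hx.1.le hx.2.le

lemma entf_eq_tangent_add_mul_klFun {a : ℝ} (ha : a ≠ 0) (y : ℝ) :
    entf y = entf a + (log a + 1) * (y - a) + a * klFun (y / a) := by
  rcases eq_or_ne y 0 with rfl | hy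
  · simp only [entf, klFun_zero, zero_div, zero_sub, mul_zero, log_zero]
    ring
  · rw [entf, entf, klFun_apply, log_div hy ha]
    field_simp
    ring

lemma sum_mul_entf_eq {ι : Type*} (t : Finset ι) (ε x : ι → ℝ) (hsum : ∑ i ∈ t, ε i = 1)
    {a : ℝ} (ha : a = ∑ i ∈ t, ε i * x i) (ha0 : a ≠ 0) :
    ∑ i ∈ t, ε i * entf (x i) = entf a + a * ∑ i ∈ t, ε i * klFun (x i / a) := by
  have hlin : ∑ i ∈ t, ε i * (x i - a) = 0 := by
    simp only [mul_sub, sum_sub_distrib, ← ha, ← sum_mul, hsum, one_mul, sub_self]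
  simp_rw [entf_eq_tangent_add_mul_klFun ha0 (x _), mul_add, sum_add_distrib, ← sum_mul, hsum,
    mul_left_comm (ε _) (log a + 1), ← mul_sum, hlin, mul_left_comm (ε _) a, ← mul_sum]
  ring

theorem stmt_5 {s : ℕ} (ε x : Fin s → ℝ) (hε : ∀ i, 0 ≤ ε i) (hx : ∀ i, 0 ≤ x i)
    (hsum : ∑ i, ε i = 1) (a : ℝ) (ha : a = ∑ i, ε i * x i)
    (β : ℝ) (hβ : β < 1) (I : Finset (Fin s)) (hI : ∀ i ∈ I, x i ≤ β * a)
    (c : ℝ) (hc : c = ∑ i ∈ I, ε i) :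
    entf a + (1 - β + entf β) * c * a ≤ ∑ i, ε i * entf (x i) := by
  have ha0 : 0 ≤ a := ha ▸ sum_nonneg fun i _ => mul_nonneg (hε i) (hx i)
  rcases ha0.eq_or_lt with rfl | hapos
  · have jensen := convexOn_mul_log.map_sum_le (fun i _ => hε i) hsum fun i _ => hx i
    simp only [smul_eq_mul, ← ha] at jensen
    simpa [entf] using jensen
  have hratio : ∀ i, 0 ≤ x i / a := fun i => div_nonneg (hx i) hapos.le
  have hratio_le : ∀ i ∈ I, x i / a ≤ β := fun i hi => (div_le_iff₀ hapos).2 (hI i hi)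
  calc entf a + (1 - β + entf β) * c * a = entf a + a * ∑ i ∈ I, ε i * klFun β := by
        rw [hc, ← sum_mul, klFun_apply, entf, entf]; ring
    _ ≤ entf a + a * ∑ i ∈ I, ε i * klFun (x i / a) := by
        gcongr with i hi
        · exact hε i
        · have hr := hratio_le i hi
          exact antitoneOn_klFun ⟨hratio i, hr.trans hβ.le⟩
            ⟨(hratio i).trans hr, hβ.le⟩ hr
    _ ≤ entf a + a * ∑ i, ε i * klFun (x i / a) := by
        refine add_le_add_right (mul_le_mul_of_nonneg_left ?_ hapos.le) _
        exact sum_le_sum_of_subset_of_nonneg (subset_univ I) fun i _ _ =>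
          mul_nonneg (hε i) (klFun_nonneg (hratio i))
    _ = ∑ i, ε i * entf (x i) := (sum_mul_entf_eq _ ε x hsum ha hapos.ne').symm
end

section
/- Let f : ℝ_{≥0} → ℝ be a convex function and G = (V,E) a graph. If 𝒫 and 𝒫' are partitions of V and 𝒫' is a refinement of 𝒫, then f(𝒫') ≥ f(𝒫), where f(𝒬) = ∑_{A,B ∈ 𝒬} (|A||B|/|V|²)·f(d(A,B)). -/
open Finset

variable {V : Type*} [Fintype V] [DecidableEq V]

/-- The number of pairs `(a, b) ∈ A × B` that are edges of `G`. -/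
def edgeCount (G : SimpleGraph V) [DecidableRel G.Adj] (A B : Finset V) : ℕ :=
  ((A ×ˢ B).filter fun p => G.Adj p.1 p.2).card

/-- The edge density `d(A, B) = e(A, B) / (|A| |B|)`. -/
noncomputable def density (G : SimpleGraph V) [DecidableRel G.Adj] (A B : Finset V) : ℝ :=
  (edgeCount G A B : ℝ) / ((A.card : ℝ) * (B.card : ℝ))

/-- `f(A, B) = (|A||B|/|V|²) f(d(A, B))`. -/
noncomputable def fPair (f : ℝ → ℝ) (G : SimpleGraph V) [DecidableRel G.Adj]
    (A B : Finset V) : ℝ :=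
  ((A.card : ℝ) * (B.card : ℝ) / (Fintype.card V : ℝ) ^ 2) * f (density G A B)

/-- `f(𝒜, ℬ) = ∑_{A' ∈ 𝒜, B' ∈ ℬ} f(A', B')`. -/
noncomputable def fPart (f : ℝ → ℝ) (G : SimpleGraph V) [DecidableRel G.Adj]
    {A B : Finset V} (𝒜 : Finpartition A) (ℬ : Finpartition B) : ℝ :=
  ∑ A' ∈ 𝒜.parts, ∑ B' ∈ ℬ.parts, fPair f G A' B'

/-!
The density `d(A, B)` is the average of the densities `d(A', B')` over pairs of parts of
partitions of `A` and `B`, weighted by `|A'||B'| / (|A||B|)`. Jensen's inequality therefore gives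
`f(A, B) ≤ ∑ f(A', B')`. Applying this to each pair of parts of `𝒫`, partitioned by the parts of
`𝒫'` they contain, and summing gives `f(𝒫) ≤ f(𝒫')`.
-/

/-- Jensen's inequality for the perspective `(x, t) ↦ t f(x / t)` of `f`. -/
theorem ConvexOn.sum_mul_map_div_le {ι : Type*} {s : Finset ι} {f : ℝ → ℝ}
    (hf : ConvexOn ℝ (Set.Ici 0) f) {c e : ι → ℝ} (hc : ∀ i ∈ s, 0 < c i)
    (he : ∀ i ∈ s, 0 ≤ e i) :
    (∑ i ∈ s, c i) * f ((∑ i ∈ s, e i) / ∑ i ∈ s, c i) ≤ ∑ i ∈ s, c i * f (e i / c i) := by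
  rcases s.eq_empty_or_nonempty with rfl | hs
  · simp
  set C := ∑ i ∈ s, c i
  have hC : 0 < C := sum_pos hc hs
  have hweights : ∑ i ∈ s, c i / C = 1 := by rw [← sum_div, div_self hC.ne']
  have hmean : ∑ i ∈ s, (c i / C) • (e i / c i) = (∑ i ∈ s, e i) / C := by
    rw [sum_div]
    refine sum_congr rfl fun i hi => ?_
    have := (hc i hi).ne'
    rw [smul_eq_mul]
    field_simp
  have jensen := hf.map_sum_le (fun i hi => (div_pos (hc i hi) hC).le) hweights
    fun i hi => Set.mem_Ici.mpr (div_nonneg (he i hi) (hc i hi).le)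
  rw [hmean] at jensen
  calc C * f ((∑ i ∈ s, e i) / C)
      ≤ C * ∑ i ∈ s, (c i / C) • f (e i / c i) := mul_le_mul_of_nonneg_left jensen hC.le
    _ = ∑ i ∈ s, c i * f (e i / c i) := by
      rw [mul_sum]
      refine sum_congr rfl fun i _ => ?_
      rw [smul_eq_mul, ← mul_assoc, mul_div_cancel₀ _ hC.ne']

theorem Finpartition.sum_parts_inf_of_le {α M : Type*} [Lattice α] [OrderBot α]
    [AddCommMonoid M] {a q A₀ : α} (P : Finpartition a) (hA₀ : A₀ ∈ P.parts) (hq : q ≤ A₀)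
    {g : α → M} (hg : g ⊥ = 0) : ∑ A ∈ P.parts, g (q ⊓ A) = g q := by
  rw [sum_eq_single_of_mem A₀ hA₀ fun A hA hne => ?_, inf_eq_left.mpr hq]
  have hdisj : Disjoint A A₀ := P.disjoint hA hA₀ hne
  rw [(hdisj.mono_right hq).symm.eq_bot, hg]

section

variable (f : ℝ → ℝ) (G : SimpleGraph V) [DecidableRel G.Adj]

omit [Fintype V] in
theorem edgeCount_eq_sum_parts {A B : Finset V} (𝒜 : Finpartition A) (ℬ : Finpartition B) :
    edgeCount G A B = ∑ p ∈ 𝒜.parts ×ˢ ℬ.parts, edgeCount G p.1 p.2 :=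
  Rel.card_interedges_finpartition G.Adj 𝒜 ℬ

omit [DecidableEq V] in
@[simp] theorem fPair_empty_left (B : Finset V) : fPair f G ∅ B = 0 := by simp [fPair]

omit [DecidableEq V] in
@[simp] theorem fPair_empty_right (A : Finset V) : fPair f G A ∅ = 0 := by simp [fPair]

variable {f}

theorem fPair_le_fPart (hf : ConvexOn ℝ (Set.Ici 0) f) {A B : Finset V}
    (𝒜 : Finpartition A) (ℬ : Finpartition B) : fPair f G A B ≤ fPart f G 𝒜 ℬ := by
  have hsize : ∑ p ∈ 𝒜.parts ×ˢ ℬ.parts, ((#p.1 : ℝ) * #p.2) = (#A : ℝ) * #B := by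
    rw [sum_product]
    dsimp only
    rw [← sum_mul_sum]
    exact_mod_cast congrArg₂ (· * ·) 𝒜.sum_card_parts ℬ.sum_card_parts
  have hedges : ∑ p ∈ 𝒜.parts ×ˢ ℬ.parts, (edgeCount G p.1 p.2 : ℝ) = edgeCount G A B := by
    rw [edgeCount_eq_sum_parts G 𝒜 ℬ]; push_cast; rfl
  have key := hf.sum_mul_map_div_le (s := 𝒜.parts ×ˢ ℬ.parts)
    (c := fun p => (#p.1 : ℝ) * #p.2) (e := fun p => (edgeCount G p.1 p.2 : ℝ))
    (fun p hp => by
      obtain ⟨h₁, h₂⟩ := mem_product.mp hp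
      exact_mod_cast mul_pos (𝒜.nonempty_of_mem_parts h₁).card_pos
        (ℬ.nonempty_of_mem_parts h₂).card_pos)
    (fun _ _ => Nat.cast_nonneg _)
  rw [hsize, hedges] at key
  have hscale : (0 : ℝ) ≤ 1 / (Fintype.card V : ℝ) ^ 2 := by positivity
  calc fPair f G A B = 1 / (Fintype.card V : ℝ) ^ 2 * ((#A * #B) * f (density G A B)) := by
        rw [fPair]; ring
    _ ≤ 1 / (Fintype.card V : ℝ) ^ 2 *
          ∑ p ∈ 𝒜.parts ×ˢ ℬ.parts, (#p.1 * #p.2) * f (density G p.1 p.2) :=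
        mul_le_mul_of_nonneg_left key hscale
    _ = fPart f G 𝒜 ℬ := by
        rw [fPart, mul_sum, sum_product]
        refine sum_congr rfl fun A' _ => sum_congr rfl fun B' _ => ?_
        rw [fPair]; ring

theorem fPart_restrict {A B A' B' : Finset V} (Q : Finpartition A) (Q' : Finpartition B)
    (hA' : A' ≤ A) (hB' : B' ≤ B) :
    fPart f G (Q.restrict hA') (Q'.restrict hB') =
      ∑ q ∈ Q.parts, ∑ q' ∈ Q'.parts, fPair f G (q ⊓ A') (q' ⊓ B') := by
  rw [fPart, Q.sum_restrict hA' _ (by simp)]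
  exact sum_congr rfl fun q _ => Q'.sum_restrict hB' _ (by simp)

theorem fPart_mono (hf : ConvexOn ℝ (Set.Ici 0) f) {A B : Finset V}
    {P Q : Finpartition A} {P' Q' : Finpartition B} (h : Q ≤ P) (h' : Q' ≤ P') :
    fPart f G P P' ≤ fPart f G Q Q' := by
  calc fPart f G P P'
      ≤ ∑ A' ∈ P.parts, ∑ B' ∈ P'.parts,
          ∑ q ∈ Q.parts, ∑ q' ∈ Q'.parts, fPair f G (q ⊓ A') (q' ⊓ B') :=
        sum_le_sum fun A' hA' => sum_le_sum fun B' hB' =>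
          (fPair_le_fPart G hf _ _).trans_eq (fPart_restrict G Q Q' (P.le hA') (P'.le hB'))
    _ = ∑ q ∈ Q.parts, ∑ q' ∈ Q'.parts,
          ∑ A' ∈ P.parts, ∑ B' ∈ P'.parts, fPair f G (q ⊓ A') (q' ⊓ B') :=
        (sum_congr rfl fun _ _ => sum_comm.trans (sum_congr rfl fun _ _ => sum_comm)).trans
          (sum_comm.trans (sum_congr rfl fun _ _ => sum_comm))
    _ = fPart f G Q Q' := by
        refine sum_congr rfl fun q hq => sum_congr rfl fun q' hq' => ?_
        obtain ⟨A₀, hA₀, hqA₀⟩ := h hq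
        obtain ⟨B₀, hB₀, hq'B₀⟩ := h' hq'
        rw [sum_congr rfl fun A' _ =>
          P'.sum_parts_inf_of_le hB₀ hq'B₀ (g := fun B' => fPair f G (q ⊓ A') B') (by simp)]
        exact P.sum_parts_inf_of_le hA₀ hqA₀ (g := fun A' => fPair f G A' q') (by simp)

end

theorem stmt_9 {V : Type*} [Fintype V] [DecidableEq V]
    (f : ℝ → ℝ) (hf : ConvexOn ℝ (Set.Ici 0) f)
    (G : SimpleGraph V) [DecidableRel G.Adj]
    (P Q : Finpartition (Finset.univ : Finset V)) (href : Q ≤ P) :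
    fPart f G P P ≤ fPart f G Q Q :=
  fPart_mono G hf href href
end

section
/- Let f(x) = x log x for x > 0 and f(0) = 0, and let G = (V,E) be a graph. Suppose A, B are disjoint vertex subsets with d(A,B) ≥ 10α, and partitions 𝒜 of A and ℬ of B form an (α,c,t)-shattering of (A,B). Then f(𝒜,ℬ) ≥ f(A,B) + (c/2)·e(A,B)/|V|², where f(A,B) = (|A||B|/|V|²)f(d(A,B)) and f(𝒜,ℬ) = ∑_{A'∈𝒜,B'∈ℬ} f(A',B'). -/
open Finset

variable {V : Type*} [Fintype V] [DecidableEq V]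

/-- The partitions `𝒜` of `A` and `ℬ` of `B` form an `(α, c, t)`-shattering of `(A, B)`:
both have at most `t` parts, and the sum of `|A'||B'|` over pairs of parts with
`d(A', B') < α` is at least `c |A| |B|`. -/
noncomputable def IsShatteringPair (G : SimpleGraph V) [DecidableRel G.Adj]
    (α c t : ℝ) {A B : Finset V} (𝒜 : Finpartition A) (ℬ : Finpartition B) : Prop :=
  (𝒜.parts.card : ℝ) ≤ t ∧ (ℬ.parts.card : ℝ) ≤ t ∧
    c * A.card * B.card ≤
      ∑ A' ∈ 𝒜.parts, ∑ B' ∈ ℬ.parts,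
        if density G A' B' < α then (A'.card : ℝ) * B'.card else 0

/-!
Write `w = |A'||B'|` and `ρ = d(A', B')` for a pair of parts and `D = d(A, B)`. Since
`∑ w ρ = e(A, B) = D ∑ w`, the tangent line of `f(x) = x log x` at `D` contributes nothing on
average, so `∑ w f(ρ) - |A||B| f(D)` is the weighted sum of the gaps between `f` and its tangent.
These gaps are nonnegative by convexity, and on a pair with `ρ < α ≤ D / 10` the gap is at
least `D / 2`: it equals `D (u log u - u + 1)` with `u = ρ / D ≤ 1/10`, and `u log u ≥ -1/e`.
Summing gives `D / 2 · c |A||B| = (c / 2) e(A, B)`.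
-/

open Real

lemma neg_exp_neg_one_le_mul_log {x : ℝ} (hx : 0 ≤ x) : -exp (-1) ≤ x * log x := by
  rcases hx.eq_or_lt with rfl | hx
  · simp [(exp_pos _).le]
  have h := log_le_sub_one_of_pos (div_pos (exp_pos (-1)) hx)
  rw [log_div (exp_pos _).ne' hx.ne', log_exp, div_sub_one hx.ne', le_div_iff₀ hx] at h
  nlinarith

lemma entf_sub_tangent {d : ℝ} (hd : 0 < d) (x : ℝ) :
    entf x - (entf d + (1 + log d) * (x - d)) = d * (entf (x / d) - x / d + 1) := by
  rcases eq_or_ne x 0 with rfl | hx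
  · simp [entf]; ring
  simp only [entf]
  rw [log_div hx hd.ne']
  field_simp
  ring

lemma entf_tangent_le {d x : ℝ} (hd : 0 < d) (hx : 0 ≤ x) :
    entf d + (1 + log d) * (x - d) ≤ entf x := by
  have hgap : x / d - 1 ≤ entf (x / d) := self_sub_one_le_mul_log (div_nonneg hx hd.le)
  have := mul_nonneg hd.le (show 0 ≤ entf (x / d) - x / d + 1 by linarith)
  linarith [entf_sub_tangent hd x]

lemma entf_tangent_add_half_le {d x : ℝ} (hd : 0 < d) (hx : 0 ≤ x) (hxd : 10 * x ≤ d) :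
    entf d + (1 + log d) * (x - d) + d / 2 ≤ entf x := by
  have hu : x / d ≤ 1 / 10 := by rw [div_le_iff₀ hd]; linarith
  have hmin : -exp (-1) ≤ entf (x / d) := neg_exp_neg_one_le_mul_log (div_nonneg hx hd.le)
  have he : exp (-1) ≤ 2 / 5 := by
    rw [exp_neg, inv_le_comm₀ (exp_pos 1) (by norm_num)]
    linarith [exp_one_gt_d9]
  have := mul_le_mul_of_nonneg_left (show 1 / 2 ≤ entf (x / d) - x / d + 1 by linarith) hd.le
  linarith [entf_sub_tangent hd x]

theorem le_sum_mul_entf_of_mean_eq {ι : Type*} (s : Finset ι) (w x : ι → ℝ) {a d : ℝ} (hd : 0 < d)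
    (had : 10 * a ≤ d) (hw : ∀ i ∈ s, 0 ≤ w i) (hx : ∀ i ∈ s, 0 ≤ x i)
    (hmean : ∑ i ∈ s, w i * x i = d * ∑ i ∈ s, w i) :
    (∑ i ∈ s, w i) * entf d + d / 2 * ∑ i ∈ s, (if x i < a then w i else 0) ≤
      ∑ i ∈ s, w i * entf (x i) := by
  have hpoint : ∀ i ∈ s, w i * entf d + (1 + log d) * (w i * x i - d * w i) +
      d / 2 * (if x i < a then w i else 0) ≤ w i * entf (x i) := by
    intro i hi
    split_ifs with hxa
    · have := mul_le_mul_of_nonneg_left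
        (entf_tangent_add_half_le hd (hx i hi) (by linarith)) (hw i hi)
      linarith
    · have := mul_le_mul_of_nonneg_left (entf_tangent_le hd (hx i hi)) (hw i hi)
      linarith
  calc (∑ i ∈ s, w i) * entf d + d / 2 * ∑ i ∈ s, (if x i < a then w i else 0)
      = ∑ i ∈ s, (w i * entf d + (1 + log d) * (w i * x i - d * w i) +
          d / 2 * (if x i < a then w i else 0)) := by
        simp only [sum_add_distrib, ← mul_sum, ← sum_mul, sum_sub_distrib, hmean]
        ring
    _ ≤ ∑ i ∈ s, w i * entf (x i) := sum_le_sum hpoint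

lemma Finpartition.sum_product_parts_card_mul_card {α : Type*} [DecidableEq α] {s t : Finset α}
    (P : Finpartition s) (Q : Finpartition t) :
    ∑ p ∈ P.parts ×ˢ Q.parts, (#p.1 : ℝ) * #p.2 = #s * #t := by
  rw [sum_product' (f := fun a b : Finset α => (#a : ℝ) * #b), ← sum_mul_sum]
  exact_mod_cast congr_arg₂ (· * ·) P.sum_card_parts Q.sum_card_parts

section Graph

variable (G : SimpleGraph V) [DecidableRel G.Adj]

omit [Fintype V] [DecidableEq V] in
lemma edgeCount_eq_card_interedges (A B : Finset V) :
    edgeCount G A B = #(G.interedges A B) := rfl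

omit [Fintype V] [DecidableEq V] in
lemma density_nonneg (A B : Finset V) : 0 ≤ density G A B := by
  unfold density; positivity

omit [Fintype V] [DecidableEq V] in
lemma card_mul_card_mul_density (A B : Finset V) :
    (#A : ℝ) * #B * density G A B = edgeCount G A B := by
  rcases eq_or_ne ((#A : ℝ) * #B) 0 with h | h
  · have hle : (edgeCount G A B : ℝ) ≤ #A * #B := by
      rw [edgeCount_eq_card_interedges]
      exact_mod_cast G.card_interedges_le_mul A B
    rw [h, zero_mul]
    exact le_antisymm (Nat.cast_nonneg _) (h ▸ hle)
  · rw [density, mul_div_cancel₀ _ h]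

omit [Fintype V] in
lemma sum_parts_edgeCount {A B : Finset V} (𝒜 : Finpartition A) (ℬ : Finpartition B) :
    ∑ p ∈ 𝒜.parts ×ˢ ℬ.parts, edgeCount G p.1 p.2 = edgeCount G A B := by
  simp only [edgeCount_eq_card_interedges]
  exact (Rel.card_interedges_finpartition G.Adj 𝒜 ℬ).symm

lemma fPart_eq_sum_div (f : ℝ → ℝ) {A B : Finset V} (𝒜 : Finpartition A)
    (ℬ : Finpartition B) :
    fPart f G 𝒜 ℬ = (∑ p ∈ 𝒜.parts ×ˢ ℬ.parts, (#p.1 : ℝ) * #p.2 * f (density G p.1 p.2)) /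
      (Fintype.card V : ℝ) ^ 2 := by
  rw [fPart, sum_div, sum_product]
  simp only [fPair]
  congr! 2 with A' _ B' _
  ring

end Graph

theorem stmt_10_general {V : Type*} [Fintype V] [DecidableEq V]
    (G : SimpleGraph V) [DecidableRel G.Adj]
    (α c t : ℝ) (hα : 0 < α)
    (A B : Finset V) (hd : 10 * α ≤ density G A B)
    (𝒜 : Finpartition A) (ℬ : Finpartition B)
    (hshat : IsShatteringPair G α c t 𝒜 ℬ) :
    fPair entf G A B + c / 2 * (edgeCount G A B : ℝ) / (Fintype.card V : ℝ) ^ 2 ≤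
      fPart entf G 𝒜 ℬ := by
  obtain ⟨-, -, hshat⟩ := hshat
  rw [← sum_product' (f := fun A' B' => if density G A' B' < α then (#A' : ℝ) * #B' else 0)]
    at hshat
  set D := density G A B
  have hD : 0 < D := by linarith
  have hmean : ∑ p ∈ 𝒜.parts ×ˢ ℬ.parts, (#p.1 : ℝ) * #p.2 * density G p.1 p.2 =
      D * ∑ p ∈ 𝒜.parts ×ˢ ℬ.parts, (#p.1 : ℝ) * #p.2 := by
    simp only [card_mul_card_mul_density]
    rw [𝒜.sum_product_parts_card_mul_card ℬ, mul_comm D, card_mul_card_mul_density]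
    exact_mod_cast sum_parts_edgeCount G 𝒜 ℬ
  have hgap := le_sum_mul_entf_of_mean_eq _ _ _ hD hd (fun _ _ => by positivity)
    (fun p _ => density_nonneg G p.1 p.2) hmean
  rw [𝒜.sum_product_parts_card_mul_card ℬ] at hgap
  rw [fPart_eq_sum_div, fPair, ← card_mul_card_mul_density]
  calc _ = ((#A : ℝ) * #B * entf D + D / 2 * (c * #A * #B)) / (Fintype.card V : ℝ) ^ 2 := by ring
    _ ≤ _ := by gcongr; exact le_trans (by gcongr) hgap

theorem stmt_10 {V : Type*} [Fintype V] [DecidableEq V]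
    (G : SimpleGraph V) [DecidableRel G.Adj]
    (α c t : ℝ) (hα : 0 < α)
    (A B : Finset V) (hAB : Disjoint A B) (hd : 10 * α ≤ density G A B)
    (𝒜 : Finpartition A) (ℬ : Finpartition B)
    (hshat : IsShatteringPair G α c t 𝒜 ℬ) :
    fPair entf G A B + c / 2 * (edgeCount G A B : ℝ) / (Fintype.card V : ℝ) ^ 2 ≤
      fPart entf G 𝒜 ℬ :=
  stmt_10_general G α c t hα A B hd 𝒜 ℬ hshat
end

section
/- Suppose 𝒬 is a partition of a set V of size n into at most k parts and υ > 0. Then there is a refinement 𝒬' of 𝒬 into at most (2υ^{-1} + 1)·k parts and a positive integer r such that all parts of 𝒬' have size at most r, and all but at most υ·n elements of V are in parts of size exactly r. -/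
/-!
Cut every part of `Q` greedily into blocks of exactly `r` elements plus one remainder of fewer
than `r` elements. The remainders cover at most `k (r - 1)` elements, and there are at most
`n / r + k` pieces, so `r = ⌈υ n / (2k)⌉` makes the first quantity at most `υ n / 2` and the
second at most `2k / υ + k`.
-/

open Finset

namespace Finpartition

variable {α : Type*} [Lattice α] [OrderBot α] [IsModularLattice α] [DecidableEq α] {a : α}

theorem bind_le (P : Finpartition a) (Q : ∀ i ∈ P.parts, Finpartition i) : P.bind Q ≤ P := by
  intro b hb
  obtain ⟨A, hA, hb⟩ := mem_bind.1 hb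
  exact ⟨A, hA, (Q A hA).le hb⟩

theorem sum_bind {M : Type*} [AddCommMonoid M] (P : Finpartition a)
    (Q : ∀ i ∈ P.parts, Finpartition i) (f : α → M) :
    ∑ p ∈ (P.bind Q).parts, f p = ∑ A ∈ P.parts.attach, ∑ p ∈ (Q A.1 A.2).parts, f p :=
  sum_combine (fun i : P.parts => Q i.1 i.2) P.supIndep.attach f

end Finpartition

theorem Finset.exists_finpartition_into_chunks {α : Type*} [DecidableEq α] {r : ℕ} (hr : 0 < r)
    (t : Finset α) :
    ∃ P : Finpartition t, (∀ p ∈ P.parts, #p ≤ r) ∧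
      ∑ p ∈ P.parts with #p ≠ r, #p < r ∧ r * #P.parts ≤ #t + r := by
  induction t using Finset.strongInduction with
  | _ t ih =>
    obtain rfl | ht := t.eq_empty_or_nonempty
    · exact ⟨Finpartition.empty _, by simp [hr]⟩
    obtain hsmall | hlarge := le_or_gt #t r
    · refine ⟨Finpartition.indiscrete ht.ne_empty, by simpa using hsmall, ?_, by simp⟩
      rw [Finpartition.indiscrete_parts, filter_singleton]
      split_ifs with hne
      · simpa using lt_of_le_of_ne hsmall hne
      · simpa using hr
    obtain ⟨u, hut, hu⟩ := exists_subset_card_eq hlarge.le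
    have hu_ne : u ≠ ⊥ := nonempty_iff_ne_empty.1 (card_pos.1 (hu ▸ hr))
    obtain ⟨P, hle, hsum, hcard⟩ := ih (t \ u) (sdiff_ssubset hut (card_pos.1 (hu ▸ hr)))
    refine ⟨P.extend hu_ne sdiff_disjoint (sdiff_union_of_subset hut), ?_, ?_, ?_⟩
    · simp only [Finpartition.extend_parts, forall_mem_insert, hu]
      exact ⟨le_rfl, hle⟩
    · rwa [Finpartition.extend_parts, filter_insert, if_neg (by simp [hu])]
    · rw [card_sdiff_of_subset hut, hu] at hcard
      rw [Finpartition.card_extend, mul_add_one]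
      omega

theorem Finpartition.exists_le_into_chunks {α : Type*} [DecidableEq α] {s : Finset α}
    (Q : Finpartition s) {r : ℕ} (hr : 0 < r) :
    ∃ Q' : Finpartition s, Q' ≤ Q ∧ (∀ p ∈ Q'.parts, #p ≤ r) ∧
      ∑ p ∈ Q'.parts with #p ≠ r, #p ≤ #Q.parts * (r - 1) ∧
      r * #Q'.parts ≤ #s + r * #Q.parts := by
  choose C hC_le hC_sum hC_card using fun t : Finset α ↦ t.exists_finpartition_into_chunks hr
  refine ⟨Q.bind fun A _ ↦ C A, Q.bind_le _, fun p hp ↦ ?_, ?_, ?_⟩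
  · obtain ⟨A, -, hp⟩ := Finpartition.mem_bind.1 hp
    exact hC_le A p hp
  · rw [sum_filter, Finpartition.sum_bind, ← card_attach (s := Q.parts), ← smul_eq_mul]
    refine sum_le_card_nsmul _ _ _ fun A _ ↦ ?_
    rw [← sum_filter]
    exact Nat.le_sub_one_of_lt (hC_sum A)
  · calc r * #(Q.bind fun A _ ↦ C A).parts
        = ∑ A ∈ Q.parts.attach, r * #(C A.1).parts := by rw [Finpartition.card_bind, mul_sum]
      _ ≤ ∑ A ∈ Q.parts.attach, (#A.1 + r) := sum_le_sum fun A _ ↦ hC_card A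
      _ = #s + r * #Q.parts := by
        rw [sum_add_distrib, sum_attach Q.parts card, Q.sum_card_parts, sum_const, card_attach,
          smul_eq_mul, mul_comm]

theorem stmt_11 {α : Type*} [DecidableEq α] (S : Finset α) (n : ℕ) (hn : S.card = n)
    (k : ℕ) (Q : Finpartition S) (hQ : Q.parts.card ≤ k) (υ : ℝ) (hυ : 0 < υ) :
    ∃ Q' : Finpartition S, Q' ≤ Q ∧
      ((Q'.parts.card : ℝ) ≤ (2 * υ⁻¹ + 1) * k) ∧
      ∃ r : ℕ, 0 < r ∧ (∀ p ∈ Q'.parts, p.card ≤ r) ∧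
        ((∑ p ∈ Q'.parts.filter fun p => p.card ≠ r, (p.card : ℝ)) ≤ υ * n) := by
  subst hn
  obtain rfl | hS := S.eq_empty_or_nonempty
  · have hparts : Q.parts = ∅ := Finpartition.parts_eq_empty_iff.2 rfl
    exact ⟨Q, le_rfl, by simp [hparts]; positivity, 1, one_pos, by simp [hparts], by simp [hparts]⟩
  have hk0 : 0 < k := (Q.parts_nonempty hS.ne_empty).card_pos.trans_le hQ
  set x : ℝ := υ * #S / (2 * k) with hx
  have hx0 : 0 < x := by have := hS.card_pos; positivity
  set r := ⌈x⌉₊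
  have hr : 0 < r := Nat.ceil_pos.2 hx0
  have hxr : x ≤ r := Nat.le_ceil x
  have hrx : (r : ℝ) - 1 ≤ x := by linarith [Nat.ceil_lt_add_one hx0.le]
  obtain ⟨Q', hle, hsize, hsum, hcard⟩ := Q.exists_le_into_chunks hr
  have hQk : (#Q.parts : ℝ) ≤ k := by exact_mod_cast hQ
  refine ⟨Q', hle, ?_, r, hr, hsize, ?_⟩
  · have hSr : (#S : ℝ) ≤ r * (2 * υ⁻¹ * k) := by
      calc (#S : ℝ) = x * (2 * υ⁻¹ * k) := by rw [hx]; field_simp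
        _ ≤ r * (2 * υ⁻¹ * k) := by gcongr
    refine le_of_mul_le_mul_left ?_ (Nat.cast_pos.2 hr : (0 : ℝ) < r)
    calc (r : ℝ) * #Q'.parts ≤ #S + r * #Q.parts := by exact_mod_cast hcard
      _ ≤ r * (2 * υ⁻¹ * k) + r * k := by gcongr
      _ = r * ((2 * υ⁻¹ + 1) * k) := by ring
  · have hr1 : (0 : ℝ) ≤ r - 1 := sub_nonneg.2 (Nat.one_le_cast.2 hr)
    rw [← Nat.cast_sum]
    calc ((∑ p ∈ Q'.parts with #p ≠ r, #p : ℕ) : ℝ) ≤ ((#Q.parts * (r - 1) : ℕ) : ℝ) := by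
          exact_mod_cast hsum
      _ = #Q.parts * ((r : ℝ) - 1) := by rw [Nat.cast_mul, Nat.cast_pred hr]
      _ ≤ k * x := mul_le_mul hQk hrx hr1 (Nat.cast_nonneg k)
      _ = υ * #S / 2 := by rw [hx]; field_simp
      _ ≤ υ * #S := by linarith [mul_pos hυ (Nat.cast_pos.2 hS.card_pos : (0 : ℝ) < #S)]
end
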